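/- arXiv:1712.04405 — 2 statements merged into one kernel-verified Lean document; each statement's English description precedes it below -/
import Mathlib

section
/- For all k ≥ 1 and all 0 ≤ j ≤ 2^{k-1}, the coefficient of λ^j in E_k(λ) is a positive integer. -/
open Polynomial

noncomputable def euclidPoly : ℕ → Polynomial ℤ
  | 0 => X + 1
  | k + 1 => euclidPoly k * (euclidPoly k - 1) + 1

private lemma euclidPoly_aux (k : ℕ) :
    (∀ j, 0 ≤ (euclidPoly k).coeff j) ∧ (euclidPoly k).coeff 0 = 1 ∧
      ∀ j ≤ 2 ^ k, 0 < (euclidPoly k).coeff j := by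
  induction k with
  | zero =>
    refine ⟨fun j => ?_, by simp [euclidPoly], fun j hj => ?_⟩
    · rcases j with _ | _ | j <;> simp [euclidPoly, coeff_X, coeff_one]
    · interval_cases j <;> simp [euclidPoly, coeff_X, coeff_one]
  | succ k ih =>
    obtain ⟨hnn, h0, hpos⟩ := ih
    set P := euclidPoly k with hP
    set Q := P - 1 with hQ
    have hQnn : ∀ j, 0 ≤ Q.coeff j := by
      intro j
      rcases j with _ | j
      · simp [hQ, h0]
      · simpa [hQ, coeff_one] using hnn (j + 1)
    have hQ0 : Q.coeff 0 = 0 := by simp [hQ, h0]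
    have hQpos : ∀ j, 1 ≤ j → j ≤ 2 ^ k → 0 < Q.coeff j := by
      intro j hj1 hj2
      have := hpos j hj2
      rcases j with _ | j
      · omega
      · simpa [hQ, coeff_one] using this
    have hE : euclidPoly (k + 1) = P * Q + 1 := rfl
    have hmulnn : ∀ j, 0 ≤ (P * Q).coeff j := by
      intro j
      rw [coeff_mul]
      exact Finset.sum_nonneg fun p _ => mul_nonneg (hnn p.1) (hQnn p.2)
    refine ⟨fun j => ?_, ?_, fun j hj => ?_⟩
    · rw [hE, coeff_add, coeff_mul]
      have : (0:ℤ) ≤ (1 : Polynomial ℤ).coeff j := by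
        rcases j with _ | j <;> simp [coeff_one]
      exact add_nonneg (by
        exact Finset.sum_nonneg fun p _ => mul_nonneg (hnn p.1) (hQnn p.2)) this
    · rw [hE]; simp [coeff_mul, hQ0, h0, Finset.Nat.antidiagonal_zero]
    · rcases Nat.eq_zero_or_pos j with rfl | hj1
      · rw [hE]; simp [coeff_mul, hQ0, h0, Finset.Nat.antidiagonal_zero]
      · -- pick l₀ = max 1 (j - 2^k), i₀ = j - l₀
        set l₀ := max 1 (j - 2 ^ k) with hl₀
        have hl₀1 : 1 ≤ l₀ := le_max_left _ _
        have hl₀2 : l₀ ≤ 2 ^ k := by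
          have : j - 2 ^ k ≤ 2 ^ k := by
            have : j ≤ 2 ^ k + 2 ^ k := by
              have := hj; rw [pow_succ] at this; omega
            omega
          have h1 : (1:ℕ) ≤ 2 ^ k := Nat.one_le_two_pow
          omega
        have hl₀j : l₀ ≤ j := by omega
        have hi₀ : j - l₀ ≤ 2 ^ k := by omega
        have hpair : (j - l₀, l₀) ∈ Finset.HasAntidiagonal.antidiagonal j := by
          simp [Finset.HasAntidiagonal.mem_antidiagonal]; omega
        have hterm : 0 < P.coeff (j - l₀) * Q.coeff l₀ :=
          mul_pos (hpos _ hi₀) (hQpos _ hl₀1 hl₀2)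
        have hsum : 0 < (P * Q).coeff j := by
          rw [coeff_mul]
          calc (0:ℤ) < P.coeff (j - l₀) * Q.coeff l₀ := hterm
            _ ≤ _ := Finset.single_le_sum
                (f := fun p => P.coeff p.1 * Q.coeff p.2)
                (fun p _ => mul_nonneg (hnn p.1) (hQnn p.2)) hpair
        rw [hE, coeff_add]
        have : (0:ℤ) ≤ (1 : Polynomial ℤ).coeff j := by
          rcases j with _ | j <;> simp [coeff_one]
        linarith

/-- All coefficients of `E_k` up to its degree `2^{k-1}` are positive integers
(0-indexed: `euclidPoly k` is the paper's `E_{k+1}`, of degree `2^k`). -/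
theorem euclidPoly_coeff_pos (k j : ℕ) (hj : j ≤ 2 ^ k) :
    0 < (euclidPoly k).coeff j := by
  exact (euclidPoly_aux k).2.2 j hj
end

section
/- For all k ≥ 1, the maximum coefficient of E_{k+1} is at least the square of the maximum coefficient of E_k. -/
open Polynomial

lemma euclidPoly_coeff_zero (k : ℕ) : (euclidPoly k).coeff 0 = 1 := by
  induction k with
  | zero => simp [euclidPoly]
  | succ k ih => simp [euclidPoly, mul_coeff_zero, ih]

lemma euclidPoly_coeff_nonneg (k : ℕ) (i : ℕ) : 0 ≤ (euclidPoly k).coeff i := by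
  induction k generalizing i with
  | zero =>
    simp only [euclidPoly, coeff_add, coeff_X, coeff_one]
    split <;> split <;> norm_num
  | succ k ih =>
    have hb : ∀ n, 0 ≤ (euclidPoly k - 1).coeff n := by
      intro n
      rcases Nat.eq_zero_or_pos n with rfl | h
      · simp [euclidPoly_coeff_zero]
      · simpa [coeff_sub, coeff_one, h.ne'] using ih n
    show 0 ≤ (euclidPoly k * (euclidPoly k - 1) + 1).coeff i
    rw [coeff_add, coeff_mul]
    have h1 : 0 ≤ (1 : Polynomial ℤ).coeff i := by
      rcases Nat.eq_zero_or_pos i with rfl | h <;> simp [coeff_one, *]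
      omega
    refine add_nonneg (Finset.sum_nonneg fun p _ => mul_nonneg (ih _) (hb _)) h1

/-- The maximum coefficient of `E_{k+1}` is at least the square of the maximum
coefficient of `E_k` (all coefficients are positive, so we may take absolute
values when maximizing). -/
theorem euclidPoly_max_coeff_sq (k : ℕ) :
    ((Finset.range ((euclidPoly k).natDegree + 1)).sup
        fun j => ((euclidPoly k).coeff j).natAbs) ^ 2 ≤
      (Finset.range ((euclidPoly (k + 1)).natDegree + 1)).sup
        fun j => ((euclidPoly (k + 1)).coeff j).natAbs := by
  set M := (Finset.range ((euclidPoly k).natDegree + 1)).sup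
      (fun j => ((euclidPoly k).coeff j).natAbs) with hM
  obtain ⟨j, hjmem, hj⟩ := Finset.exists_mem_eq_sup
      (Finset.range ((euclidPoly k).natDegree + 1))
      (Finset.nonempty_range_iff.mpr (Nat.succ_ne_zero _))
      (fun j => ((euclidPoly k).coeff j).natAbs)
  have hc0 : ((euclidPoly (k + 1)).coeff 0).natAbs = 1 := by
    rw [euclidPoly_coeff_zero]; rfl
  rcases Nat.eq_zero_or_pos j with rfl | hj1
  · have hM1 : M = 1 := by
      rw [hM, hj, euclidPoly_coeff_zero]; rfl
    rw [hM1, one_pow]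
    calc 1 = ((euclidPoly (k + 1)).coeff 0).natAbs := hc0.symm
    _ ≤ _ := Finset.le_sup (f := fun n => ((euclidPoly (k + 1)).coeff n).natAbs)
        (Finset.mem_range.mpr (Nat.succ_pos _))
  · -- main case : j ≥ 1
    have ha : (euclidPoly k).coeff j = (M : ℤ) := by
      rw [hM, hj]
      exact (Int.natAbs_of_nonneg (euclidPoly_coeff_nonneg k j)).symm
    have hbj : (euclidPoly k - 1).coeff j = (M : ℤ) := by
      rw [coeff_sub, coeff_one, if_neg hj1.ne', sub_zero, ha]
    have hb : ∀ n, 0 ≤ (euclidPoly k - 1).coeff n := by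
      intro n
      rcases Nat.eq_zero_or_pos n with rfl | h
      · simp [euclidPoly_coeff_zero]
      · simpa [coeff_sub, coeff_one, h.ne'] using euclidPoly_coeff_nonneg k n
    have hprod : ((M : ℤ)) ^ 2 ≤ (euclidPoly k * (euclidPoly k - 1)).coeff (2 * j) := by
      rw [coeff_mul]
      have hmem : (j, j) ∈ Finset.HasAntidiagonal.antidiagonal (2 * j) := by
        rw [Finset.HasAntidiagonal.mem_antidiagonal]; ring
      have key := Finset.single_le_sum
          (f := fun p : ℕ × ℕ => (euclidPoly k).coeff p.1 * (euclidPoly k - 1).coeff p.2)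
          (fun p _ => mul_nonneg (euclidPoly_coeff_nonneg k _) (hb _)) hmem
      refine le_trans (le_of_eq ?_) key
      simp only [ha, hbj, sq]
    have hcoeff : ((M : ℤ)) ^ 2 ≤ (euclidPoly (k + 1)).coeff (2 * j) := by
      show ((M : ℤ)) ^ 2 ≤ (euclidPoly k * (euclidPoly k - 1) + 1).coeff (2 * j)
      rw [coeff_add, coeff_one, if_neg (by omega : ¬ 2 * j = 0), add_zero]
      exact hprod
    have hMpos : 1 ≤ M := by
      calc 1 = ((euclidPoly k).coeff 0).natAbs := by rw [euclidPoly_coeff_zero]; rfl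
      _ ≤ M := Finset.le_sup (f := fun n => ((euclidPoly k).coeff n).natAbs)
          (Finset.mem_range.mpr (Nat.succ_pos _))
    have hne : (euclidPoly (k + 1)).coeff (2 * j) ≠ 0 := by
      intro h
      rw [h] at hcoeff
      have hp : (0 : ℤ) < (M : ℤ) ^ 2 := by positivity
      exact hp.not_ge hcoeff
    have hdeg : 2 * j ≤ (euclidPoly (k + 1)).natDegree := le_natDegree_of_ne_zero hne
    calc M ^ 2 ≤ ((euclidPoly (k + 1)).coeff (2 * j)).natAbs := by
          have := hcoeff.trans (Int.le_natAbs)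
          exact_mod_cast this
    _ ≤ _ := Finset.le_sup (f := fun n => ((euclidPoly (k + 1)).coeff n).natAbs)
        (Finset.mem_range.mpr (by omega))
end
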